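/- Let G : ℝ^d → ℝ be differentiable with L-Lipschitz gradient (L > 0). Let k ≤ d, let θ ∈ ℝ^d be k-sparse, g ∈ ℝ^d, α > 0, and let θ⁺ be any minimizer of u ↦ ‖u − (θ − αg)‖ over all k-sparse u ∈ ℝ^d. Then ‖g − ∇G(θ⁺) + (1/α)(θ⁺ − θ)‖² ≤ 2‖g − ∇G(θ)‖² + (2/α)(G(θ) − G(θ⁺)) + (2L² + 3L/α)‖θ⁺ − θ‖². -/

import Mathlib

open scoped RealInnerProductSpace

/-!
Comparing `θ⁺` with the feasible point `θ` in the projection gives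
`‖θ⁺ - θ‖² + 2α⟪g, θ⁺ - θ⟫ ≤ 0`, which absorbs both the cross term `(2/α)⟪g, θ⁺ - θ⟫` and the
term `α⁻²‖θ⁺ - θ‖²` in the expansion of the squared witness. What remains,
`-(2/α)⟪∇G(θ⁺), θ⁺ - θ⟫`, is bounded by the descent lemma at `θ` together with the Lipschitz
bound on `∇G(θ) - ∇G(θ⁺)`, and `‖g - ∇G(θ⁺)‖² ≤ 2‖g - ∇G(θ)‖² + 2L²‖θ⁺ - θ‖²`.
-/

/-- The `L₀` pseudo-norm: number of nonzero coordinates. -/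
noncomputable def l0norm {d : ℕ} (z : EuclideanSpace ℝ (Fin d)) : ℕ :=
  (Finset.univ.filter fun i => z i ≠ 0).card

theorem le_add_deriv_add_half_of_deriv_sub_le {φ φ' : ℝ → ℝ} {M : ℝ}
    (hφ : ∀ t, HasDerivAt φ (φ' t) t) (hφ' : ∀ t ∈ Set.Ioo (0 : ℝ) 1, φ' t - φ' 0 ≤ M * t) :
    φ 1 ≤ φ 0 + φ' 0 + M / 2 := by
  set ψ : ℝ → ℝ := fun t => φ t - t * φ' 0 - M / 2 * t ^ 2
  have hψ : ∀ t, HasDerivAt ψ (φ' t - φ' 0 - M * t) t := fun t =>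
    (((hφ t).fun_sub ((hasDerivAt_id' t).mul_const (φ' 0))).fun_sub
      ((hasDerivAt_pow 2 t).const_mul (M / 2))).congr_deriv (by ring)
  have hanti : AntitoneOn ψ (Set.Icc 0 1) := by
    refine antitoneOn_of_hasDerivWithinAt_nonpos (convex_Icc 0 1)
      (fun t _ => (hψ t).continuousAt.continuousWithinAt)
      (fun t _ => (hψ t).hasDerivWithinAt) fun t ht => ?_
    rw [interior_Icc] at ht
    linarith [hφ' t ht]
  have hψ01 := hanti (Set.left_mem_Icc.2 zero_le_one) (Set.right_mem_Icc.2 zero_le_one) zero_le_one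
  simp only [ψ] at hψ01
  linarith

section

variable {E : Type*} [NormedAddCommGroup E] [InnerProductSpace ℝ E]

theorem norm_sq_add_two_inner_nonpos_of_norm_add_le {x v : E} (h : ‖x + v‖ ≤ ‖v‖) :
    ‖x‖ ^ 2 + 2 * ⟪v, x⟫ ≤ 0 := by
  have hsq := pow_le_pow_left₀ (norm_nonneg _) h 2
  rw [norm_add_sq_real, real_inner_comm] at hsq
  linarith

theorem norm_add_sq_le_two_mul_add (x y : E) : ‖x + y‖ ^ 2 ≤ 2 * ‖x‖ ^ 2 + 2 * ‖y‖ ^ 2 := by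
  have hpar := parallelogram_law_with_norm ℝ x y
  nlinarith [sq_nonneg ‖x - y‖]

variable [CompleteSpace E] {G : E → ℝ} {L : ℝ}

theorem apply_le_add_inner_gradient_add_half_mul_sq (hG : Differentiable ℝ G)
    (hGlip : ∀ x y, ‖gradient G x - gradient G y‖ ≤ L * ‖x - y‖) (x y : E) :
    G y ≤ G x + ⟪gradient G x, y - x⟫ + L / 2 * ‖y - x‖ ^ 2 := by
  have hline : ∀ t : ℝ, HasDerivAt (fun t : ℝ => G (x + t • (y - x)))
      ⟪gradient G (x + t • (y - x)), y - x⟫ t := fun t => by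
    have hpath : HasDerivAt (fun t : ℝ => x + t • (y - x)) (y - x) t := by
      simpa using ((hasDerivAt_id t).smul_const (y - x)).const_add x
    simpa [InnerProductSpace.toDual_apply_apply, Function.comp_def] using
      (hG _).hasGradientAt.hasFDerivAt.comp_hasDerivAt t hpath
  have hseg := le_add_deriv_add_half_of_deriv_sub_le (M := L * ‖y - x‖ ^ 2) hline fun t ht => by
    simp only [zero_smul, add_zero, ← inner_sub_left]
    calc ⟪gradient G (x + t • (y - x)) - gradient G x, y - x⟫
        ≤ ‖gradient G (x + t • (y - x)) - gradient G x‖ * ‖y - x‖ := real_inner_le_norm _ _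
      _ ≤ L * ‖t • (y - x)‖ * ‖y - x‖ := by
          gcongr
          simpa using hGlip (x + t • (y - x)) x
      _ = L * ‖y - x‖ ^ 2 * t := by
          rw [norm_smul, Real.norm_of_nonneg ht.1.le]
          ring
  simp only [zero_smul, add_zero, one_smul, add_sub_cancel] at hseg
  linarith

theorem norm_sub_gradient_add_inv_smul_sq_le (hG : Differentiable ℝ G)
    (hGlip : ∀ x y, ‖gradient G x - gradient G y‖ ≤ L * ‖x - y‖) {θ g p : E} {α : ℝ}
    (hα : 0 < α) (hp : ‖p - (θ - α • g)‖ ≤ ‖θ - (θ - α • g)‖) :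
    ‖g - gradient G p + α⁻¹ • (p - θ)‖ ^ 2 ≤
      2 * ‖g - gradient G θ‖ ^ 2 + (2 / α) * (G θ - G p) +
        (2 * L ^ 2 + 3 * L / α) * ‖p - θ‖ ^ 2 := by
  have hproj : ‖p - θ‖ ^ 2 + 2 * (α * ⟪g, p - θ⟫) ≤ 0 := by
    rw [← real_inner_smul_left]
    apply norm_sq_add_two_inner_nonpos_of_norm_add_le
    rwa [sub_sub_cancel, ← sub_add] at hp
  have hdesc := apply_le_add_inner_gradient_add_half_mul_sq hG hGlip θ p
  have hgrad : ‖gradient G θ - gradient G p‖ ≤ L * ‖p - θ‖ := by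
    simpa only [norm_sub_rev θ] using hGlip θ p
  have hinner : ⟪gradient G θ - gradient G p, p - θ⟫ ≤ L * ‖p - θ‖ ^ 2 :=
    calc _ ≤ ‖gradient G θ - gradient G p‖ * ‖p - θ‖ := real_inner_le_norm _ _
      _ ≤ L * ‖p - θ‖ * ‖p - θ‖ := by gcongr
      _ = L * ‖p - θ‖ ^ 2 := by ring
  have hsplit : ‖g - gradient G p‖ ^ 2 ≤ 2 * ‖g - gradient G θ‖ ^ 2 + 2 * L ^ 2 * ‖p - θ‖ ^ 2 :=
    calc _ = ‖(g - gradient G θ) + (gradient G θ - gradient G p)‖ ^ 2 := by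
          rw [sub_add_sub_cancel]
      _ ≤ 2 * ‖g - gradient G θ‖ ^ 2 + 2 * ‖gradient G θ - gradient G p‖ ^ 2 :=
          norm_add_sq_le_two_mul_add _ _
      _ ≤ 2 * ‖g - gradient G θ‖ ^ 2 + 2 * (L * ‖p - θ‖) ^ 2 := by gcongr
      _ = _ := by ring
  have hexpand : ‖g - gradient G p + α⁻¹ • (p - θ)‖ ^ 2 = ‖g - gradient G p‖ ^ 2
      + 2 * α⁻¹ * (⟪g, p - θ⟫ - ⟪gradient G p, p - θ⟫) + α⁻¹ ^ 2 * ‖p - θ‖ ^ 2 := by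
    rw [norm_add_sq_real, real_inner_smul_right, inner_sub_left, norm_smul, mul_pow,
      Real.norm_eq_abs, sq_abs]
    ring
  rw [inner_sub_left] at hinner
  rw [hexpand, div_eq_mul_inv, div_eq_mul_inv]
  have hαinv : α * α⁻¹ = 1 := mul_inv_cancel₀ hα.ne'
  linear_combination α⁻¹ ^ 2 * hproj + 2 * α⁻¹ * hinner + 2 * α⁻¹ * hdesc + hsplit
    - 2 * α⁻¹ * ⟪g, p - θ⟫ * hαinv

end

theorem hard_thresholding_stationarity_witness_bound_general
    (d k : ℕ) (G : EuclideanSpace ℝ (Fin d) → ℝ) (L : ℝ)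
    (hGdiff : Differentiable ℝ G)
    (hGlip : ∀ x y : EuclideanSpace ℝ (Fin d),
      ‖gradient G x - gradient G y‖ ≤ L * ‖x - y‖)
    (θ g θplus : EuclideanSpace ℝ (Fin d)) (α : ℝ) (hα : 0 < α)
    (hθ : l0norm θ ≤ k)
    (hmin : ∀ u : EuclideanSpace ℝ (Fin d), l0norm u ≤ k →
      ‖θplus - (θ - α • g)‖ ≤ ‖u - (θ - α • g)‖) :
    ‖g - gradient G θplus + α⁻¹ • (θplus - θ)‖ ^ 2 ≤
      2 * ‖g - gradient G θ‖ ^ 2 + (2 / α) * (G θ - G θplus) +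
        (2 * L ^ 2 + 3 * L / α) * ‖θplus - θ‖ ^ 2 :=
  norm_sub_gradient_add_inv_smul_sq_le hGdiff hGlip hα (hmin θ hθ)

/-- Bound on the stationarity witness for a single hard-thresholding step:
`‖g − ∇G(θ⁺) + (1/α)(θ⁺ − θ)‖² ≤ 2‖g − ∇G(θ)‖² + (2/α)(G(θ) − G(θ⁺)) + (2L² + 3L/α)‖θ⁺ − θ‖²`. -/
theorem hard_thresholding_stationarity_witness_bound
    (d k : ℕ) (hk : k ≤ d) (G : EuclideanSpace ℝ (Fin d) → ℝ) (L : ℝ) (hL : 0 < L)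
    (hGdiff : Differentiable ℝ G)
    (hGlip : ∀ x y : EuclideanSpace ℝ (Fin d),
      ‖gradient G x - gradient G y‖ ≤ L * ‖x - y‖)
    (θ g θplus : EuclideanSpace ℝ (Fin d)) (α : ℝ) (hα : 0 < α)
    (hθ : l0norm θ ≤ k) (hθplus : l0norm θplus ≤ k)
    (hmin : ∀ u : EuclideanSpace ℝ (Fin d), l0norm u ≤ k →
      ‖θplus - (θ - α • g)‖ ≤ ‖u - (θ - α • g)‖) :
    ‖g - gradient G θplus + α⁻¹ • (θplus - θ)‖ ^ 2 ≤
      2 * ‖g - gradient G θ‖ ^ 2 + (2 / α) * (G θ - G θplus) +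
        (2 * L ^ 2 + 3 * L / α) * ‖θplus - θ‖ ^ 2 :=
  hard_thresholding_stationarity_witness_bound_general d k G L hGdiff hGlip θ g θplus α hα hθ hmin
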